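/- Let G be a strongly connected digraph. Then q(G) ≤ max over arcs (v_i,v_j) ∈ E(G) of ( d_i^+ + d_j^+ + sqrt( (d_i^+ − d_j^+)² + 4·sqrt(d_i^+ m_i^+)·sqrt(d_j^+ m_j^+) ) ) / 2. -/

import Mathlib

open Matrix Finset

/-- Spectral radius of a complex square matrix: the largest modulus of its eigenvalues. -/
noncomputable def specRad {n : ℕ} (M : Matrix (Fin n) (Fin n) ℂ) : ℝ :=
  sSup {x : ℝ | ∃ μ ∈ spectrum ℂ M, x = ‖μ‖}

/-- Spectral radius of a real square matrix (via its complex eigenvalues). -/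
noncomputable def specRadR {n : ℕ} (M : Matrix (Fin n) (Fin n) ℝ) : ℝ :=
  specRad (M.map Complex.ofReal)

/-- Adjacency matrix of a digraph given by its arc relation. -/
def adjM {n : ℕ} (E : Fin n → Fin n → Prop) [DecidableRel E] :
    Matrix (Fin n) (Fin n) ℝ := fun i j => if E i j then 1 else 0

/-- Outdegree of vertex `i`. -/
def outdeg {n : ℕ} (E : Fin n → Fin n → Prop) [DecidableRel E] (i : Fin n) : ℕ :=
  (Finset.univ.filter (fun j => E i j)).card

/-- Signless Laplacian `Q(G) = D(G) + A(G)`. -/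
noncomputable def Qmat {n : ℕ} (E : Fin n → Fin n → Prop) [DecidableRel E] :
    Matrix (Fin n) (Fin n) ℝ :=
  Matrix.diagonal (fun i => (outdeg E i : ℝ)) + adjM E

/-- Signless Laplacian spectral radius `q(G)`. -/
noncomputable def qG {n : ℕ} (E : Fin n → Fin n → Prop) [DecidableRel E] : ℝ :=
  specRadR (Qmat E)

/-- Average 2-outdegree `m_i^+`. -/
noncomputable def m2 {n : ℕ} (E : Fin n → Fin n → Prop) [DecidableRel E] (i : Fin n) : ℝ :=
  (∑ j ∈ Finset.univ.filter (fun j => E i j), (outdeg E j : ℝ)) / (outdeg E i : ℝ)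

/-- The finset of arcs of the digraph. -/
def arcs {n : ℕ} (E : Fin n → Fin n → Prop) [DecidableRel E] : Finset (Fin n × Fin n) :=
  Finset.univ.filter (fun p => E p.1 p.2)

/-- Strong connectivity of a digraph. -/
def StrongConn {n : ℕ} (E : Fin n → Fin n → Prop) : Prop :=
  ∀ i j : Fin n, Relation.ReflTransGen E i j

/-- Irreducibility of a square matrix: the digraph of nonzero entries is strongly connected. -/
def MatIrred {n : ℕ} {α : Type*} [Zero α] (M : Matrix (Fin n) (Fin n) α) : Prop :=
  ∀ i j : Fin n, i ≠ j → Relation.TransGen (fun a b => M a b ≠ 0) i j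

/-!
Let `x` be an eigenvector of `Q(G)` for `μ` and put `y j = |x j| / √(d j)`. Choose `u` with `y u`
maximal and an out-neighbour `v` of `u` with `y v` maximal among the out-neighbours of `u`. By
Cauchy–Schwarz, `∑_{i → j} √(d j) ≤ √(d i) √(d i m i)`, so rows `u` and `v` of `Q x = μ x` give
`|μ - d u| y u ≤ √(d u m u) y v` and `|μ - d v| y v ≤ √(d v m v) y u`. Multiplying, `μ` lies in
the Cassini oval `|μ - d u| |μ - d v| ≤ √(d u m u) √(d v m v)` of the arc `(u, v)`, and every point
of that oval has modulus at most the bound of the theorem.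
-/

theorem Matrix.exists_mulVec_eq_smul_of_mem_spectrum {ι K : Type*} [Fintype ι] [DecidableEq ι]
    [Field K] {M : Matrix ι ι K} {μ : K} (hμ : μ ∈ spectrum K M) :
    ∃ x ≠ 0, M *ᵥ x = μ • x := by
  rw [← Matrix.spectrum_toLin', ← Module.End.hasEigenvalue_iff_mem_spectrum] at hμ
  obtain ⟨x, hx⟩ := hμ.exists_hasEigenvector
  exact ⟨x, hx.2, hx.apply_eq_smul⟩

theorem mul_le_mul_of_cross_bounds {A B s t y z : ℝ} (hB : 0 ≤ B) (hs : 0 ≤ s) (hy : 0 < y)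
    (h₁ : A * y ≤ s * z) (h₂ : B * z ≤ t * y) : A * B ≤ s * t := by
  refine le_of_mul_le_mul_right ?_ hy
  calc A * B * y = B * (A * y) := by ring
    _ ≤ B * (s * z) := mul_le_mul_of_nonneg_left h₁ hB
    _ = s * (B * z) := by ring
    _ ≤ s * (t * y) := mul_le_mul_of_nonneg_left h₂ hs
    _ = s * t * y := by ring

theorem Complex.norm_le_of_norm_sub_mul_norm_sub_le {μ : ℂ} {a b s t : ℝ} (ha : 0 ≤ a)
    (hb : 0 ≤ b) (h : ‖μ - a‖ * ‖μ - b‖ ≤ s * t) :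
    ‖μ‖ ≤ (a + b + √((a - b) ^ 2 + 4 * s * t)) / 2 := by
  have hst : 0 ≤ s * t := (by positivity : (0 : ℝ) ≤ ‖μ - a‖ * ‖μ - b‖).trans h
  have hsq : √((a - b) ^ 2 + 4 * s * t) ^ 2 = (a - b) ^ 2 + 4 * s * t :=
    Real.sq_sqrt (by nlinarith)
  have hge : |a - b| ≤ √((a - b) ^ 2 + 4 * s * t) :=
    Real.abs_le_sqrt (by nlinarith)
  have hμa : ‖μ‖ - a ≤ ‖μ - a‖ := by
    simpa only [Complex.norm_of_nonneg ha] using norm_sub_norm_le μ (a : ℂ)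
  have hμb : ‖μ‖ - b ≤ ‖μ - b‖ := by
    simpa only [Complex.norm_of_nonneg hb] using norm_sub_norm_le μ (b : ℂ)
  by_contra! hlt
  have hta : a < ‖μ‖ := by cases abs_cases (a - b) <;> linarith
  have htb : b < ‖μ‖ := by cases abs_cases (a - b) <;> linarith
  have hprod : (‖μ‖ - a) * (‖μ‖ - b) ≤ s * t :=
    (mul_le_mul hμa hμb (by linarith) (norm_nonneg _)).trans h
  nlinarith [Real.sqrt_nonneg ((a - b) ^ 2 + 4 * s * t)]

section Digraph

variable {n : ℕ} (E : Fin n → Fin n → Prop) [DecidableRel E]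

theorem outdeg_pos_of_strongConn (hsc : StrongConn E) (harcs : (arcs E).Nonempty) (i : Fin n) :
    0 < outdeg E i := by
  obtain ⟨p, hp⟩ := harcs
  have hpath : Relation.TransGen E i p.2 := .tail' (hsc i p.1) (Finset.mem_filter.mp hp).2
  obtain ⟨j, hij, -⟩ := Relation.TransGen.head'_iff.mp hpath
  exact Finset.card_pos.mpr ⟨j, Finset.mem_filter.mpr ⟨Finset.mem_univ j, hij⟩⟩

theorem outdeg_mul_m2 (i : Fin n) :
    (outdeg E i : ℝ) * m2 E i = ∑ j ∈ Finset.univ.filter (fun j => E i j), (outdeg E j : ℝ) := by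
  rcases Nat.eq_zero_or_pos (outdeg E i) with h | h
  · rw [h, Nat.cast_zero, zero_mul]
    rw [outdeg, Finset.card_eq_zero] at h
    rw [h, Finset.sum_empty]
  · exact mul_div_cancel₀ _ (by positivity)

theorem sum_sqrt_outdeg_le (i : Fin n) :
    ∑ j ∈ Finset.univ.filter (fun j => E i j), √(outdeg E j : ℝ) ≤
      √(outdeg E i : ℝ) * √((outdeg E i : ℝ) * m2 E i) := by
  rw [← Real.sqrt_mul (Nat.cast_nonneg _)]
  refine Real.le_sqrt_of_sq_le ?_
  calc (∑ j ∈ Finset.univ.filter (fun j => E i j), √(outdeg E j : ℝ)) ^ 2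
      ≤ (outdeg E i : ℝ) * ∑ j ∈ Finset.univ.filter (fun j => E i j), √(outdeg E j : ℝ) ^ 2 :=
        sq_sum_le_card_mul_sum_sq
    _ = (outdeg E i : ℝ) * ((outdeg E i : ℝ) * m2 E i) := by
        simp only [Real.sq_sqrt (Nat.cast_nonneg _), outdeg_mul_m2]

theorem Qmat_map_mulVec_apply (x : Fin n → ℂ) (i : Fin n) :
    ((Qmat E).map Complex.ofReal *ᵥ x) i =
      (outdeg E i : ℂ) * x i + ∑ j ∈ Finset.univ.filter (fun j => E i j), x j := by
  rw [Qmat, Matrix.map_add _ Complex.ofReal_add, Matrix.add_mulVec, Pi.add_apply,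
    Matrix.diagonal_map Complex.ofReal_zero, Matrix.mulVec_diagonal, Finset.sum_filter]
  simp [Matrix.mulVec, dotProduct, adjM, apply_ite Complex.ofReal]

theorem norm_sub_outdeg_mul_norm_le {μ : ℂ} {x : Fin n → ℂ}
    (hx : (Qmat E).map Complex.ofReal *ᵥ x = μ • x) (i : Fin n) {c : ℝ} (hc : 0 ≤ c)
    (hbd : ∀ j, E i j → ‖x j‖ ≤ c * √(outdeg E j : ℝ)) :
    ‖μ - outdeg E i‖ * ‖x i‖ ≤ c * (√(outdeg E i : ℝ) * √((outdeg E i : ℝ) * m2 E i)) := by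
  have hrow : (μ - outdeg E i) * x i = ∑ j ∈ Finset.univ.filter (fun j => E i j), x j := by
    have := congrFun hx i
    rw [Qmat_map_mulVec_apply, Pi.smul_apply, smul_eq_mul] at this
    rw [sub_mul, ← this]
    ring
  calc ‖μ - outdeg E i‖ * ‖x i‖
      = ‖∑ j ∈ Finset.univ.filter (fun j => E i j), x j‖ := by rw [← hrow, norm_mul]
    _ ≤ ∑ j ∈ Finset.univ.filter (fun j => E i j), ‖x j‖ := norm_sum_le _ _
    _ ≤ ∑ j ∈ Finset.univ.filter (fun j => E i j), c * √(outdeg E j : ℝ) :=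
        Finset.sum_le_sum fun j hj => hbd j (Finset.mem_filter.mp hj).2
    _ ≤ c * (√(outdeg E i : ℝ) * √((outdeg E i : ℝ) * m2 E i)) := by
        rw [← Finset.mul_sum]
        exact mul_le_mul_of_nonneg_left (sum_sqrt_outdeg_le E i) hc

theorem exists_arc_norm_sub_mul_norm_sub_le (hpos : ∀ i, 0 < outdeg E i) {μ : ℂ}
    {x : Fin n → ℂ} (hx0 : x ≠ 0) (hx : (Qmat E).map Complex.ofReal *ᵥ x = μ • x) :
    ∃ u v, E u v ∧ ‖μ - outdeg E u‖ * ‖μ - outdeg E v‖ ≤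
      √((outdeg E u : ℝ) * m2 E u) * √((outdeg E v : ℝ) * m2 E v) := by
  have hsqrt : ∀ j, 0 < √(outdeg E j : ℝ) := fun j => Real.sqrt_pos.mpr (by exact_mod_cast hpos j)
  set y : Fin n → ℝ := fun j => ‖x j‖ / √(outdeg E j : ℝ)
  have hrow : ∀ i {c : ℝ}, 0 ≤ c → (∀ j, E i j → y j ≤ c) →
      ‖μ - outdeg E i‖ * y i ≤ √((outdeg E i : ℝ) * m2 E i) * c := by
    intro i c hc hbd
    have := norm_sub_outdeg_mul_norm_le E hx i hc fun j hj => (div_le_iff₀ (hsqrt j)).mp (hbd j hj)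
    rw [mul_div_assoc', div_le_iff₀ (hsqrt i)]
    linarith
  obtain ⟨i, hi⟩ := Function.ne_iff.mp hx0
  obtain ⟨u, -, hu⟩ := Finset.exists_max_image Finset.univ y ⟨i, Finset.mem_univ i⟩
  obtain ⟨v, hv, hvu⟩ := Finset.exists_max_image _ y (Finset.card_pos.mp (hpos u))
  have hyu : 0 < y u := (div_pos (norm_pos_iff.mpr hi) (hsqrt i)).trans_le (hu i (Finset.mem_univ i))
  refine ⟨u, v, (Finset.mem_filter.mp hv).2, mul_le_mul_of_cross_bounds (z := y v) (norm_nonneg _)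
    (Real.sqrt_nonneg _) hyu ?_ ?_⟩
  · exact hrow u (by positivity) fun j hj => hvu j (Finset.mem_filter.mpr ⟨Finset.mem_univ j, hj⟩)
  · exact hrow v hyu.le fun j _ => hu j (Finset.mem_univ j)

end Digraph

theorem stmt_7_general {n : ℕ} (E : Fin n → Fin n → Prop) [DecidableRel E]
    (hsc : StrongConn E) (harcs : (arcs E).Nonempty) :
    qG E ≤ (arcs E).sup' harcs (fun p =>
      ((outdeg E p.1 : ℝ) + (outdeg E p.2 : ℝ) +
        Real.sqrt (((outdeg E p.1 : ℝ) - (outdeg E p.2 : ℝ)) ^ 2 +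
          4 * Real.sqrt ((outdeg E p.1 : ℝ) * m2 E p.1) *
            Real.sqrt ((outdeg E p.2 : ℝ) * m2 E p.2))) / 2) := by
  refine Real.sSup_le ?_ (harcs.elim fun p hp => le_trans (by positivity) (Finset.le_sup' _ hp))
  rintro _ ⟨μ, hμ, rfl⟩
  obtain ⟨x, hx0, hx⟩ := Matrix.exists_mulVec_eq_smul_of_mem_spectrum hμ
  obtain ⟨u, v, huv, hle⟩ :=
    exists_arc_norm_sub_mul_norm_sub_le E (outdeg_pos_of_strongConn E hsc harcs) hx0 hx
  refine le_trans ?_ (Finset.le_sup' _ (Finset.mem_filter.mpr ⟨Finset.mem_univ (u, v), huv⟩))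
  exact Complex.norm_le_of_norm_sub_mul_norm_sub_le (Nat.cast_nonneg _) (Nat.cast_nonneg _)
    (by simpa only [Complex.ofReal_natCast] using hle)

/-- `q(G) ≤ max over arcs of
`(d_i⁺+d_j⁺+√((d_i⁺−d_j⁺)²+4√(d_i⁺m_i⁺)√(d_j⁺m_j⁺)))/2`. -/
theorem stmt_7 {n : ℕ} (E : Fin n → Fin n → Prop) [DecidableRel E]
    (hloop : ∀ i, ¬ E i i) (hsc : StrongConn E) (harcs : (arcs E).Nonempty) :
    qG E ≤ (arcs E).sup' harcs (fun p =>
      ((outdeg E p.1 : ℝ) + (outdeg E p.2 : ℝ) +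
        Real.sqrt (((outdeg E p.1 : ℝ) - (outdeg E p.2 : ℝ)) ^ 2 +
          4 * Real.sqrt ((outdeg E p.1 : ℝ) * m2 E p.1) *
            Real.sqrt ((outdeg E p.2 : ℝ) * m2 E p.2))) / 2) :=
  stmt_7_general E hsc harcs
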